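/- arXiv:math/0010048 — 3 statements merged into one kernel-verified Lean document; each statement's English description precedes it below -/
import Mathlib

section
/- Lower semicontinuity condition for the one-dimensional Blake–Zisserman functional: let 0 < α and β > 0 with α ≤ β ≤ 2α. If u ∈ ℋ²(0,L) is a piecewise-H² function and u is obtained as a limit where a jump point degenerates into two crease points (i.e., a jump of size ε → 0 splits), then the penalty satisfies β ≤ 2α, ensuring #-counting lower semicontinuity: for any t and sequences where one jump is approximated by two creases, β·1 ≤ α·2. Conversely if β > 2α the functional F fails to be lower semicontinuous: there exist u_n → u in L¹(0,L) with F(u) > liminf_n F(u_n). -/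
/-!
A unit jump at `c` is the `L¹` limit of the ramps rising linearly from `0` to `1` on
`[c - δ, c]` as `δ → 0`. Both the jump and the ramps are piecewise affine, so their second
derivatives vanish (at a jump or a corner `deriv` takes its junk value `0`) and the functional
reduces to its counting terms: the jump costs `β`, each ramp `2α` for its two creases. Hence
`liminf F(uₙ) = 2α < β = F(u)`.
-/

open Filter Topology MeasureTheory

/-- A piecewise-`H²` (here: piecewise-`C²`) function on `(0, L)`, with a finite set
`S` of jump points and a finite set `S'` of crease points. -/
structure PiecewiseH2 (L : ℝ) where
  toFun : ℝ → ℝ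
  /-- the jump set `S(u)` -/
  S : Finset ℝ
  /-- the crease set `S(u')` -/
  S' : Finset ℝ
  hS : ↑S ⊆ Set.Ioo 0 L
  hS' : ↑S' ⊆ Set.Ioo 0 L
  hdisj : Disjoint S S'
  smooth : ∀ x ∈ Set.Ioo 0 L \ (↑S ∪ ↑S' : Set ℝ), ContDiffAt ℝ 2 toFun x
  contAtCrease : ∀ x ∈ S', ContinuousAt toFun x
  jumpAt : ∀ x ∈ S, ¬ ContinuousAt toFun x
  creaseAt : ∀ x ∈ S', ¬ DifferentiableAt ℝ toFun x
  sq_integrable : IntervalIntegrable (fun t => (deriv (deriv toFun) t) ^ 2) volume 0 L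

/-- The one-dimensional Blake–Zisserman functional
`F(u) = ∫₀^L |u''|² dt + α #S(u') + β #S(u)`. -/
noncomputable def BZ (L α β : ℝ) (u : PiecewiseH2 L) : ℝ :=
  (∫ t in (0:ℝ)..L, (deriv (deriv u.toFun) t) ^ 2) + α * u.S'.card + β * u.S.card

open Set

section IndicatorConst

variable {X M : Type*} [TopologicalSpace X] [Zero M] {s : Set X} {x : X}

theorem indicator_const_eventuallyEq_of_notMem_frontier (k : M) (hx : x ∉ frontier s) :
    s.indicator (fun _ => k) =ᶠ[𝓝 x] fun _ => s.indicator (fun _ => k) x := by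
  rw [← mem_compl_iff, compl_frontier_eq_union_interior] at hx
  rcases hx with hx | hx
  · filter_upwards [mem_interior_iff_mem_nhds.1 hx] with y hy
    rw [indicator_of_mem hy, indicator_of_mem (interior_subset hx)]
  · filter_upwards [mem_interior_iff_mem_nhds.1 hx] with y hy
    rw [indicator_of_notMem hy, indicator_of_notMem (interior_subset hx)]

theorem not_continuousAt_indicator_const_of_mem_frontier [TopologicalSpace M] [T2Space M]
    {k : M} (hk : k ≠ 0) (hx : x ∈ frontier s) : ¬ ContinuousAt (s.indicator fun _ => k) x := by
  intro hcont
  have hlim : ∀ t : Set X, x ∈ closure t → ∀ m : M, (∀ y ∈ t, s.indicator (fun _ => k) y = m) →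
      s.indicator (fun _ => k) x = m := by
    intro t ht m hm
    have := mem_closure_iff_nhdsWithin_neBot.1 ht
    exact tendsto_nhds_unique (hcont.tendsto.mono_left nhdsWithin_le_nhds)
      (tendsto_const_nhds.congr' (eventually_mem_nhdsWithin.mono fun y hy => (hm y hy).symm))
  have h1 := hlim s (frontier_subset_closure hx) k fun y hy => indicator_of_mem hy _
  have h0 := hlim sᶜ (frontier_subset_closure (frontier_compl s ▸ hx)) 0
    fun y hy => indicator_of_notMem hy _
  exact hk (h1.symm.trans h0)

end IndicatorConst

theorem deriv_indicator_const {𝕜 F : Type*} [NontriviallyNormedField 𝕜] [NormedAddCommGroup F]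
    [NormedSpace 𝕜 F] (s : Set 𝕜) (k : F) : deriv (s.indicator fun _ => k) = 0 := by
  funext x
  by_cases hx : x ∈ frontier s
  · rcases eq_or_ne k 0 with rfl | hk
    · simp
    · exact deriv_zero_of_not_differentiableAt fun hd =>
        not_continuousAt_indicator_const_of_mem_frontier hk hx hd.continuousAt
  · exact (indicator_const_eventuallyEq_of_notMem_frontier k hx).deriv_eq.trans (deriv_const _ _)

theorem not_differentiableAt_of_hasDerivWithinAt_Iic_Ici {f : ℝ → ℝ} {x c d : ℝ} (hcd : c ≠ d)
    (hc : HasDerivWithinAt f c (Iic x) x) (hd : HasDerivWithinAt f d (Ici x) x) :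
    ¬ DifferentiableAt ℝ f x := fun hf =>
  hcd <| ((uniqueDiffOn_Iic x x self_mem_Iic).eq_deriv _ hc hf.hasDerivAt.hasDerivWithinAt).trans
    ((uniqueDiffOn_Ici x x self_mem_Ici).eq_deriv _ hd hf.hasDerivAt.hasDerivWithinAt).symm

noncomputable def heaviside (c : ℝ) : ℝ → ℝ := (Ici c).indicator fun _ => 1

noncomputable def ramp (a b : ℝ) (t : ℝ) : ℝ := max 0 (min 1 ((t - a) / (b - a)))

section Ramp

variable {a b t : ℝ}

theorem ramp_eq_zero (hab : a ≤ b) (ht : t ≤ a) : ramp a b t = 0 :=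
  max_eq_left <| (min_le_right _ _).trans
    (div_nonpos_of_nonpos_of_nonneg (by linarith) (by linarith))

theorem ramp_eq_one (hab : a < b) (ht : b ≤ t) : ramp a b t = 1 := by
  rw [ramp, min_eq_left ((one_le_div (by linarith)).2 (by linarith)), max_eq_right zero_le_one]

theorem ramp_eq_of_mem_Icc (hab : a < b) (ht : t ∈ Icc a b) : ramp a b t = (t - a) / (b - a) := by
  rw [ramp, min_eq_right ((div_le_one (by linarith)).2 (by linarith [ht.2])),
    max_eq_right (div_nonneg (by linarith [ht.1]) (by linarith))]

theorem ramp_mem_Icc (a b t : ℝ) : ramp a b t ∈ Icc 0 1 :=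
  ⟨le_max_left _ _, max_le zero_le_one (min_le_left _ _)⟩

theorem continuous_ramp (a b : ℝ) : Continuous (ramp a b) := by
  unfold ramp; fun_prop

theorem hasDerivAt_sub_div_sub (a b t : ℝ) :
    HasDerivAt (fun s => (s - a) / (b - a)) (b - a)⁻¹ t := by
  simpa [div_eq_mul_inv] using ((hasDerivAt_id t).sub_const a).div_const (b - a)

theorem not_differentiableAt_ramp_left (hab : a < b) : ¬ DifferentiableAt ℝ (ramp a b) a := by
  refine not_differentiableAt_of_hasDerivWithinAt_Iic_Ici (inv_ne_zero (sub_pos.2 hab).ne').symm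
    ((hasDerivWithinAt_const a _ 0).congr_of_mem (fun t ht => ramp_eq_zero hab.le ht) self_mem_Iic)
    (((hasDerivAt_sub_div_sub a b a).hasDerivWithinAt.congr_of_mem
      (fun t ht => ramp_eq_of_mem_Icc hab ht) (left_mem_Icc.2 hab.le)).mono_of_mem_nhdsWithin
      (Icc_mem_nhdsGE hab))

theorem not_differentiableAt_ramp_right (hab : a < b) : ¬ DifferentiableAt ℝ (ramp a b) b := by
  refine not_differentiableAt_of_hasDerivWithinAt_Iic_Ici (inv_ne_zero (sub_pos.2 hab).ne')
    (((hasDerivAt_sub_div_sub a b b).hasDerivWithinAt.congr_of_mem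
      (fun t ht => ramp_eq_of_mem_Icc hab ht) (right_mem_Icc.2 hab.le)).mono_of_mem_nhdsWithin
      (Icc_mem_nhdsLE hab))
    ((hasDerivWithinAt_const b _ 1).congr_of_mem (fun t ht => ramp_eq_one hab ht) self_mem_Ici)

-- One formula for the three regimes `t < a`, `a < t < b` and `b < t`.
theorem ramp_eventuallyEq_affine (hab : a < b) (hta : t ≠ a) (htb : t ≠ b) :
    ramp a b =ᶠ[𝓝 t]
      fun s => (Ioo a b).indicator (fun _ => (b - a)⁻¹) t * (s - a) + heaviside b t := by
  rcases lt_or_gt_of_ne hta with hta | hta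
  · have hmid : t ∉ Ioo a b := fun h => (h.1.trans hta).false
    filter_upwards [Iio_mem_nhds hta] with s hs
    simp [ramp_eq_zero hab.le (le_of_lt hs), indicator_of_notMem hmid, heaviside,
      indicator_of_notMem (show t ∉ Ici b from fun h => by linarith [mem_Ici.1 h])]
  rcases lt_or_gt_of_ne htb with htb | htb
  · filter_upwards [Ioo_mem_nhds hta htb] with s hs
    rw [ramp_eq_of_mem_Icc hab (Ioo_subset_Icc_self hs),
      indicator_of_mem (show t ∈ Ioo a b from ⟨hta, htb⟩), heaviside,
      indicator_of_notMem (show t ∉ Ici b from fun h => by linarith [mem_Ici.1 h]), add_zero]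
    field_simp [(sub_pos.2 hab).ne']
  · filter_upwards [Ioi_mem_nhds htb] with s hs
    simp [ramp_eq_one hab (le_of_lt hs), heaviside, htb.le]

theorem deriv_ramp (hab : a < b) : deriv (ramp a b) = (Ioo a b).indicator fun _ => (b - a)⁻¹ := by
  funext t
  by_cases hta : t = a
  · subst hta
    simp [deriv_zero_of_not_differentiableAt (not_differentiableAt_ramp_left hab)]
  by_cases htb : t = b
  · subst htb
    simp [deriv_zero_of_not_differentiableAt (not_differentiableAt_ramp_right hab)]
  rw [(ramp_eventuallyEq_affine hab hta htb).deriv_eq]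
  exact ((((hasDerivAt_id t).sub_const a).const_mul _).add_const _).deriv.trans (mul_one _)

theorem contDiffAt_ramp (hab : a < b) (hta : t ≠ a) (htb : t ≠ b) {n : WithTop ℕ∞} :
    ContDiffAt ℝ n (ramp a b) t :=
  ContDiffAt.congr_of_eventuallyEq (by fun_prop) (ramp_eventuallyEq_affine hab hta htb)

end Ramp

theorem deriv_deriv_heaviside (c : ℝ) : deriv (deriv (heaviside c)) = 0 := by
  simp [heaviside, deriv_indicator_const]

theorem deriv_deriv_ramp {a b : ℝ} (hab : a < b) : deriv (deriv (ramp a b)) = 0 := by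
  rw [deriv_ramp hab, deriv_indicator_const]

namespace PiecewiseH2

variable {L : ℝ}

noncomputable def heaviside {c : ℝ} (hc : c ∈ Ioo 0 L) : PiecewiseH2 L where
  toFun := _root_.heaviside c
  S := {c}
  S' := ∅
  hS := by simpa using hc
  hS' := by simp
  hdisj := by simp
  smooth x hx := by
    have hxc : x ∉ frontier (Ici c) := by simpa [frontier_Ici] using hx.2
    exact contDiffAt_const.congr_of_eventuallyEq
      (indicator_const_eventuallyEq_of_notMem_frontier _ hxc)
  contAtCrease := by simp
  jumpAt x hx := by
    rw [Finset.mem_singleton.1 hx]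
    exact not_continuousAt_indicator_const_of_mem_frontier one_ne_zero (by simp)
  creaseAt := by simp
  sq_integrable := by simp [deriv_deriv_heaviside]

noncomputable def ramp {a b : ℝ} (ha : 0 < a) (hab : a < b) (hbL : b < L) : PiecewiseH2 L where
  toFun := _root_.ramp a b
  S := ∅
  S' := {a, b}
  hS := by simp
  hS' := by
    simp only [Finset.coe_insert, Finset.coe_singleton, insert_subset_iff, singleton_subset_iff]
    exact ⟨⟨ha, hab.trans hbL⟩, ⟨ha.trans hab, hbL⟩⟩
  hdisj := by simp
  smooth x hx := by
    simp only [Finset.coe_empty, Finset.coe_insert, Finset.coe_singleton, empty_union,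
      Set.mem_sdiff, mem_insert_iff, mem_singleton_iff, not_or] at hx
    exact contDiffAt_ramp hab hx.2.1 hx.2.2
  contAtCrease _ _ := (continuous_ramp a b).continuousAt
  jumpAt := by simp
  creaseAt x hx := by
    rcases Finset.mem_insert.1 hx with rfl | hx
    · exact not_differentiableAt_ramp_left hab
    · rw [Finset.mem_singleton.1 hx]
      exact not_differentiableAt_ramp_right hab
  sq_integrable := by simp [deriv_deriv_ramp hab]

theorem BZ_eq_of_deriv_deriv_eq_zero (α β : ℝ) (u : PiecewiseH2 L)
    (hu : deriv (deriv u.toFun) = 0) : BZ L α β u = α * u.S'.card + β * u.S.card := by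
  simp [BZ, hu]

theorem BZ_heaviside (α β : ℝ) {c : ℝ} (hc : c ∈ Ioo 0 L) : BZ L α β (heaviside hc) = β := by
  rw [BZ_eq_of_deriv_deriv_eq_zero _ _ _ (deriv_deriv_heaviside c)]
  simp [heaviside]

theorem BZ_ramp (α β : ℝ) {a b : ℝ} (ha : 0 < a) (hab : a < b) (hbL : b < L) :
    BZ L α β (ramp ha hab hbL) = 2 * α := by
  rw [BZ_eq_of_deriv_deriv_eq_zero _ _ _ (deriv_deriv_ramp hab)]
  simp [ramp, Finset.card_pair hab.ne, mul_comm]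

end PiecewiseH2

theorem integral_abs_ramp_sub_heaviside_le {L a b : ℝ} (ha : 0 ≤ a) (hab : a < b) (hbL : b ≤ L) :
    ∫ t in (0:ℝ)..L, |ramp a b t - heaviside b t| ≤ b - a := by
  have hbound : ∀ t ∈ Ioc a b, ‖|ramp a b t - heaviside b t|‖ ≤ 1 := by
    intro t ht
    have hr := ramp_mem_Icc a b t
    rcases ht.2.lt_or_eq with htb | rfl
    · simp only [heaviside, indicator_of_notMem (show t ∉ Ici b from not_le.2 htb),
        sub_zero, norm_abs_eq_norm, Real.norm_eq_abs, abs_le]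
      constructor <;> linarith [hr.1, hr.2]
    · simp [heaviside, ramp_eq_one hab le_rfl]
  have hagree : ∀ t ∈ Ioc 0 L \ Ioc a b, |ramp a b t - heaviside b t| = 0 := by
    rintro t ⟨-, ht⟩
    rcases le_or_gt t a with hta | hta
    · simp [ramp_eq_zero hab.le hta, heaviside, hta.trans_lt hab]
    · have hbt : b < t := not_le.1 fun h => ht ⟨hta, h⟩
      simp [ramp_eq_one hab hbt.le, heaviside, hbt.le]
  rw [intervalIntegral.integral_of_le ((ha.trans hab.le).trans hbL),
    setIntegral_eq_of_subset_of_forall_sdiff_eq_zero measurableSet_Ioc (Ioc_subset_Ioc ha hbL)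
      hagree]
  calc ∫ t in Ioc a b, |ramp a b t - heaviside b t|
      ≤ 1 * volume.real (Ioc a b) :=
        (le_abs_self _).trans (norm_setIntegral_le_of_norm_le_const measure_Ioc_lt_top hbound)
    _ = b - a := by simp [Real.volume_real_Ioc, hab.le]

theorem blake_zisserman_not_lsc_of_beta_gt_two_alpha_general
    (L α β : ℝ) (hL : 0 < L) (h : β > 2 * α) :
    ∃ u : PiecewiseH2 L, ∃ U : ℕ → PiecewiseH2 L,
      Tendsto (fun n => ∫ t in (0:ℝ)..L, |(U n).toFun t - u.toFun t|) atTop (𝓝 0) ∧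
      liminf (fun n => BZ L α β (U n)) atTop < BZ L α β u := by
  set c := L / 2
  have hc : c ∈ Ioo 0 L := ⟨half_pos hL, half_lt_self hL⟩
  set δ : ℕ → ℝ := fun n => c / (n + 2)
  have hδ : ∀ n, 0 < δ n ∧ δ n < c := fun n =>
    ⟨by positivity, div_lt_self hc.1 (by linarith [n.cast_nonneg (α := ℝ)])⟩
  have hδ_tendsto : Tendsto δ atTop (𝓝 0) :=
    tendsto_const_nhds.div_atTop (tendsto_natCast_atTop_atTop.atTop_add tendsto_const_nhds)
  refine ⟨.heaviside hc, fun n => .ramp (a := c - δ n) (by linarith [hδ n])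
    (by linarith [hδ n]) hc.2, ?_, ?_⟩
  · refine squeeze_zero (fun n => intervalIntegral.integral_nonneg hL.le fun _ _ => abs_nonneg _)
      (fun n => ?_) hδ_tendsto
    exact (integral_abs_ramp_sub_heaviside_le (by linarith [hδ n]) (by linarith [hδ n])
      hc.2.le).trans_eq (sub_sub_cancel c (δ n))
  · simp only [PiecewiseH2.BZ_ramp, PiecewiseH2.BZ_heaviside, liminf_const]
    exact h

/-- Failure of lower semicontinuity of the Blake–Zisserman functional when `β > 2α`:
there is a sequence `u_n → u` in `L¹(0,L)` (a jump degenerating into two creases)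
with `F(u) > liminf_n F(u_n)`. -/
theorem blake_zisserman_not_lsc_of_beta_gt_two_alpha
    (L α β : ℝ) (hL : 0 < L) (hα : 0 < α) (hβ : 0 < β) (h : β > 2 * α) :
    ∃ u : PiecewiseH2 L, ∃ U : ℕ → PiecewiseH2 L,
      Tendsto (fun n => ∫ t in (0:ℝ)..L, |(U n).toFun t - u.toFun t|) atTop (𝓝 0) ∧
      liminf (fun n => BZ L α β (U n)) atTop < BZ L α β u :=
  blake_zisserman_not_lsc_of_beta_gt_two_alpha_general L α β hL h
end

section
/- Discrete second difference at a jump point: let u be piecewise C² on (0,L) with bounded second derivative, let t ∈ S(u) be a jump point with t = x_i a grid point, and let u_n be the piecewise-constant left-interpolation of u on the grid λ_n ℤ. Then (u_n(x_{i+1}) + u_n(x_{i−1}) − 2u_n(x_i))/λ_n² = (u(t+) − u(t−) + o(1))/λ_n² as n → ∞; in particular its absolute value exceeds c₂/(λ_n √λ_n) for all sufficiently large n. -/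
open Filter Topology

/-!
By continuity alone, the numerator `g (t + λ) + f (t - λ) - 2 f t` tends to the jump
`g t - f t ≠ 0`, while `c₂ / (λ √λ) = c₂ √λ / λ²` and `c₂ √λ → 0`.
-/

theorem tendsto_add_sub_two_mul_of_continuousAt {α : Type*} {l : Filter α} {f g : ℝ → ℝ}
    {t : ℝ} (hf : ContinuousAt f t) (hg : ContinuousAt g t) {h : α → ℝ}
    (hh : Tendsto h l (𝓝 0)) :
    Tendsto (fun x => g (t + h x) + f (t - h x) - 2 * f t) l (𝓝 (g t - f t)) := by
  have hplus : Tendsto (fun x => t + h x) l (𝓝 t) := by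
    simpa using tendsto_const_nhds.add hh
  have hminus : Tendsto (fun x => t - h x) l (𝓝 t) := by
    simpa using tendsto_const_nhds.sub hh
  have := ((hg.tendsto.comp hplus).add (hf.tendsto.comp hminus)).sub
    (tendsto_const_nhds (x := 2 * f t))
  rwa [show g t + f t - 2 * f t = g t - f t by ring] at this

theorem div_mul_sqrt_eq_mul_sqrt_div_sq (c : ℝ) {h : ℝ} (hh : 0 < h) :
    c / (h * √h) = c * √h / h ^ 2 := by
  have hs : 0 < √h := Real.sqrt_pos.2 hh
  rw [div_eq_div_iff (by positivity) (by positivity)]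
  linear_combination (-(c * h)) * Real.mul_self_sqrt hh.le

theorem eventually_div_mul_sqrt_lt_abs_div_sq {α : Type*} {l : Filter α} {A h : α → ℝ}
    {a : ℝ} (c : ℝ) (hA : Tendsto A l (𝓝 a)) (ha : a ≠ 0) (hh : Tendsto h l (𝓝[>] 0)) :
    ∀ᶠ x in l, c / (h x * √(h x)) < |A x / h x ^ 2| := by
  have hsqrt : Tendsto (fun x => c * √(h x)) l (𝓝 0) := by
    simpa using ((Real.continuous_sqrt.tendsto 0).comp
      (tendsto_nhds_of_tendsto_nhdsWithin hh)).const_mul c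
  filter_upwards [hsqrt.eventually_lt hA.abs (abs_pos.2 ha),
    hh.eventually eventually_mem_nhdsWithin] with x hlt hmem
  have hpos : 0 < h x := hmem
  rw [div_mul_sqrt_eq_mul_sqrt_div_sq c hpos, abs_div, abs_of_pos (pow_pos hpos 2)]
  exact div_lt_div_of_pos_right hlt (pow_pos hpos 2)

theorem tendsto_const_div_natCast_nhdsGT_zero {L : ℝ} (hL : 0 < L) :
    Tendsto (fun n : ℕ => L / n) atTop (𝓝[>] 0) := by
  refine tendsto_nhdsWithin_iff.2 ⟨tendsto_const_div_atTop_nhds_zero_nat L, ?_⟩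
  filter_upwards [eventually_ge_atTop 1] with n hn
  exact div_pos hL (by exact_mod_cast hn)

theorem second_difference_at_jump_general
    (L c₂ : ℝ) (hL : 0 < L)
    (t : ℝ)
    (f g : ℝ → ℝ) (hf : ContDiff ℝ 2 f) (hg : ContDiff ℝ 2 g)
    (hjump : g t ≠ f t)
    (lam : ℕ → ℝ) (hlam : ∀ n, lam n = L / n)
    (d : ℕ → ℝ)
    (hd : ∀ n, d n = (g (t + lam n) + f (t - lam n) - 2 * f t) / (lam n) ^ 2) :
    Tendsto (fun n => d n * (lam n) ^ 2) atTop (𝓝 (g t - f t)) ∧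
    ∀ᶠ n in atTop, |d n| > c₂ / (lam n * Real.sqrt (lam n)) := by
  have hlam0 : Tendsto lam atTop (𝓝[>] 0) := by
    simpa only [funext hlam] using tendsto_const_div_natCast_nhdsGT_zero hL
  have hA := tendsto_add_sub_two_mul_of_continuousAt (t := t) hf.continuous.continuousAt
    hg.continuous.continuousAt (tendsto_nhds_of_tendsto_nhdsWithin hlam0)
  refine ⟨hA.congr' ?_, ?_⟩
  · filter_upwards [hlam0.eventually eventually_mem_nhdsWithin] with n hn
    have hn : 0 < lam n := hn
    rw [hd n, div_mul_cancel₀ _ (by positivity)]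
  · filter_upwards [eventually_div_mul_sqrt_lt_abs_div_sq c₂ hA (sub_ne_zero.2 hjump) hlam0]
      with n hn
    rwa [hd n]

/-- Discrete second difference at a jump point: if `u` equals a `C²` function `f`
(with bounded second derivative) to the left of `t` and a `C²` function `g` to the
right, with a jump `g(t) ≠ f(t)`, and `u_n` is the piecewise-constant
left-interpolation on the grid of mesh `λ_n = L/n`, then the discrete second
difference centred at `t` satisfies
`(u_n(t+λ_n) + u_n(t−λ_n) − 2u_n(t))/λ_n² = (u(t+) − u(t−) + o(1))/λ_n²`;
in particular its absolute value eventually exceeds `c₂/(λ_n √λ_n)`. -/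
theorem second_difference_at_jump
    (L c₂ : ℝ) (hL : 0 < L) (hc₂ : 0 < c₂)
    (t : ℝ) (ht : t ∈ Set.Ioo 0 L)
    (f g : ℝ → ℝ) (hf : ContDiff ℝ 2 f) (hg : ContDiff ℝ 2 g)
    (Mf Mg : ℝ) (hMf : ∀ x, |deriv (deriv f) x| ≤ Mf)
    (hMg : ∀ x, |deriv (deriv g) x| ≤ Mg)
    (hjump : g t ≠ f t)
    (lam : ℕ → ℝ) (hlam : ∀ n, lam n = L / n)
    (d : ℕ → ℝ)
    (hd : ∀ n, d n = (g (t + lam n) + f (t - lam n) - 2 * f t) / (lam n) ^ 2) :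
    Tendsto (fun n => d n * (lam n) ^ 2) atTop (𝓝 (g t - f t)) ∧
    ∀ᶠ n in atTop, |d n| > c₂ / (lam n * Real.sqrt (lam n)) :=
  second_difference_at_jump_general L c₂ hL t f g hf hg hjump lam hlam d hd
end

section
/- Γ-limsup inequality at regular functions: let u ∈ C²([0,L]) (no jumps, no creases) and let u_n ∈ 𝒜_n be the restriction of u to the grid λ_nℤ ∩ [0,L]. Then lim_n E_n(u_n) = ∫₀^L |u''|² dt, where E_n(u) = Σ_{i=1}^{n−1} λ_n Ψ_n((u(x_{i+1}) + u(x_{i−1}) − 2u(x_i))/λ_n²); in particular limsup_n E_n(u_n) ≤ F(u). -/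
open Filter Topology Set MeasureTheory

/-!
Applying the mean value theorem twice, each discrete second difference quotient of `u` at a
grid node is a value `u''(ζ)` at a point `ζ` less than one mesh width `λ_n` away. As `u''` is
bounded on `[0, L]` while the threshold `c₁ / √λ_n` of the quadratic regime of `Ψ_n` tends to
infinity, eventually every term of `E_n` lies in that regime. Then `E_n` is a tagged Riemann sum
of the continuous function `(u'')²` over the grid, which converges to `∫₀ᴸ |u''|²` by uniform
continuity.
-/

noncomputable def secondDiffQuot (u : ℝ → ℝ) (h a : ℝ) : ℝ :=
  (u (a + h) + u (a - h) - 2 * u a) / h ^ 2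

theorem exists_secondDiffQuot_eq_deriv_deriv {u : ℝ → ℝ} (hu : Differentiable ℝ u)
    (hu' : Differentiable ℝ (deriv u)) {h : ℝ} (hh : 0 < h) (a : ℝ) :
    ∃ ζ ∈ Ioo (a - h) (a + h), secondDiffQuot u h a = deriv (deriv u) ζ := by
  have hφ : ∀ t, HasDerivAt (fun t => u (t + h) - u t) (deriv u (t + h) - deriv u t) t :=
    fun t => ((hu (t + h)).hasDerivAt.comp_add_const t h).sub (hu t).hasDerivAt
  obtain ⟨η, hη, hη_eq⟩ := exists_hasDerivAt_eq_slope _ _ (sub_lt_self a hh)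
    (fun t _ => (hφ t).continuousAt.continuousWithinAt) fun t _ => hφ t
  obtain ⟨ζ, hζ, hζ_eq⟩ := exists_hasDerivAt_eq_slope (deriv u) (deriv (deriv u))
    (lt_add_of_pos_right η hh) hu'.continuous.continuousOn fun t _ => (hu' t).hasDerivAt
  refine ⟨ζ, ⟨by linarith [hη.1, hζ.1], by linarith [hη.2, hζ.2]⟩, ?_⟩
  rw [hζ_eq, hη_eq, sub_add_cancel, secondDiffQuot]
  field_simp [hh.ne']
  ring

theorem secondDiffQuot_natCast_mul (u : ℝ → ℝ) (h : ℝ) {i : ℕ} (hi : 1 ≤ i) :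
    (u ((i + 1 : ℕ) * h) + u ((i - 1 : ℕ) * h) - 2 * u (i * h)) / h ^ 2 =
      secondDiffQuot u h (i * h) := by
  rw [secondDiffQuot, Nat.cast_sub hi]
  push_cast
  ring_nf

theorem tendsto_const_div_sqrt_div_natCast_atTop {c L : ℝ} (hc : 0 < c) (hL : 0 < L) :
    Tendsto (fun n : ℕ => c / √(L / n)) atTop atTop := by
  have h : ∀ n : ℕ, c / √(L / n) = c / √L * √n := fun n => by
    rw [Real.sqrt_div' _ (Nat.cast_nonneg n), div_div_eq_mul_div, mul_div_right_comm]
  simp only [h]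
  exact (Real.tendsto_sqrt_atTop.comp tendsto_natCast_atTop_atTop).const_mul_atTop
    (by positivity)

theorem Icc_around_grid_point_subset {L : ℝ} (hL : 0 ≤ L) {n i : ℕ} (hi : i ∈ Finset.Ico 1 n) :
    Icc (i * (L / n) - L / n) (i * (L / n) + L / n) ⊆ Icc 0 L := by
  obtain ⟨hi₁, hin⟩ := Finset.mem_Ico.mp hi
  have hi₁' : (1 : ℝ) ≤ i := by exact_mod_cast hi₁
  have hin' : (i : ℝ) + 1 ≤ n := by exact_mod_cast hin
  have hh : 0 ≤ L / n := by positivity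
  have hnh : n * (L / n) = L :=
    mul_div_cancel₀ L (Nat.cast_ne_zero.mpr (Nat.pos_of_ne_zero (by omega)).ne')
  intro t ht
  constructor <;> nlinarith [ht.1, ht.2, mul_le_mul_of_nonneg_right hi₁' hh,
    mul_le_mul_of_nonneg_right hin' hh]

theorem abs_mul_sub_intervalIntegral_le {f : ℝ → ℝ} {a h c ω : ℝ} (hh : 0 ≤ h)
    (hf : IntervalIntegrable f volume a (a + h)) (hω : ∀ t ∈ Icc a (a + h), |c - f t| ≤ ω) :
    |h * c - ∫ t in a..a + h, f t| ≤ h * ω := by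
  have hconst : h * c = ∫ _ in a..a + h, c := by simp
  rw [hconst, ← intervalIntegral.integral_sub intervalIntegrable_const hf]
  have := intervalIntegral.norm_integral_le_of_norm_le_const (a := a) (b := a + h) (C := ω)
    (f := fun t => c - f t)
    fun t ht => hω t (Ioc_subset_Icc_self (by rwa [uIoc_of_le (by linarith)] at ht))
  rwa [add_sub_cancel_left, abs_of_nonneg hh, mul_comm] at this

theorem IntervalIntegrable.mono_of_mem_Icc {f : ℝ → ℝ} {L a b : ℝ} (hL : 0 ≤ L)
    (hf : IntervalIntegrable f volume 0 L) (ha : a ∈ Icc 0 L) (hb : b ∈ Icc 0 L) :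
    IntervalIntegrable f volume a b :=
  hf.mono_set (uIcc_subset_uIcc (by rwa [uIcc_of_le hL]) (by rwa [uIcc_of_le hL]))

theorem intervalIntegral_eq_add_sum_Ico_grid {f : ℝ → ℝ} {L : ℝ} (hL : 0 ≤ L) {n : ℕ}
    (hn : 1 ≤ n) (hf : IntervalIntegrable f volume 0 L) :
    ∫ t in 0..L, f t =
      (∫ t in 0..L / n, f t) +
        ∑ i ∈ Finset.Ico 1 n, ∫ t in i * (L / n)..i * (L / n) + L / n, f t := by
  set h := L / n
  have hnh : n * h = L := mul_div_cancel₀ L (by positivity)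
  have hnode : ∀ k ≤ n, (k : ℝ) * h ∈ Icc 0 L := fun k hk =>
    ⟨by positivity, hnh ▸ mul_le_mul_of_nonneg_right (by exact_mod_cast hk) (by positivity)⟩
  have hh₁ : h ∈ Icc 0 L := by simpa using hnode 1 hn
  have hcells := intervalIntegral.sum_integral_adjacent_intervals_Ico (f := f) (μ := volume)
    (a := fun k : ℕ => k * h) hn fun k hk =>
      hf.mono_of_mem_Icc hL (hnode k hk.2.le) (hnode (k + 1) hk.2)
  simp only [Nat.cast_add, Nat.cast_one, add_mul, one_mul, hnh] at hcells
  rw [hcells, intervalIntegral.integral_add_adjacent_intervals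
    (hf.mono_of_mem_Icc hL ⟨le_rfl, hL⟩ hh₁)
    (hf.mono_of_mem_Icc hL hh₁ ⟨hL, le_rfl⟩)]

theorem abs_sum_Ico_mul_sub_integral_le {f : ℝ → ℝ} {L M ω : ℝ} {n : ℕ} (hL : 0 < L)
    (hn : 1 ≤ n) (hf : IntervalIntegrable f volume 0 L) (hM : ∀ t ∈ Icc 0 L, |f t| ≤ M)
    (hω : ∀ s ∈ Icc 0 L, ∀ t ∈ Icc 0 L, |s - t| ≤ 2 * (L / n) → |f s - f t| ≤ ω)
    {v : ℕ → ℝ} (hv : ∀ i ∈ Finset.Ico 1 n,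
      ∃ ζ ∈ Icc (i * (L / n) - L / n) (i * (L / n) + L / n), v i = f ζ) :
    |∑ i ∈ Finset.Ico 1 n, L / n * v i - ∫ t in 0..L, f t| ≤ L / n * M + L * ω := by
  set h := L / n
  have hh : 0 < h := div_pos hL (by exact_mod_cast hn)
  have hnh : n * h = L := mul_div_cancel₀ L (by positivity)
  have hω₀ : 0 ≤ ω := by
    simpa using hω 0 ⟨le_rfl, hL.le⟩ 0 ⟨le_rfl, hL.le⟩ (by simp [hh.le])
  have h₀ : (0 : ℝ) ∈ Icc 0 L := ⟨le_rfl, hL.le⟩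
  have hh₁ : h ∈ Icc 0 L := ⟨hh.le, div_le_self hL.le (by exact_mod_cast hn)⟩
  have hcell : ∀ i ∈ Finset.Ico 1 n, |h * v i - ∫ t in i * h..i * h + h, f t| ≤ h * ω := by
    intro i hi
    obtain ⟨ζ, hζ, hvζ⟩ := hv i hi
    rw [hvζ]
    have hsub := Icc_around_grid_point_subset hL.le hi
    have hcell_sub : Icc (i * h) (i * h + h) ⊆ Icc (i * h - h) (i * h + h) :=
      Icc_subset_Icc_left (by linarith)
    refine abs_mul_sub_intervalIntegral_le hh.le (hf.mono_of_mem_Icc hL.le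
      (hsub ⟨by linarith, by linarith⟩) (hsub ⟨by linarith, le_rfl⟩))
      fun t ht => hω ζ (hsub hζ) t (hsub (hcell_sub ht)) ?_
    rw [abs_le]
    constructor <;> linarith [hζ.1, hζ.2, ht.1, ht.2]
  have hfirst : |∫ t in 0..h, f t| ≤ h * M := by
    simpa using abs_mul_sub_intervalIntegral_le (a := 0) (c := 0) hh.le
      (by simpa using hf.mono_of_mem_Icc hL.le h₀ hh₁)
      fun t ht => by simpa using hM t (Icc_subset_Icc_right hh₁.2 (by simpa using ht))
  rw [intervalIntegral_eq_add_sum_Ico_grid hL.le hn hf]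
  calc |∑ i ∈ Finset.Ico 1 n, h * v i -
          ((∫ t in 0..h, f t) + ∑ i ∈ Finset.Ico 1 n, ∫ t in i * h..i * h + h, f t)|
      = |∑ i ∈ Finset.Ico 1 n, (h * v i - ∫ t in i * h..i * h + h, f t) - ∫ t in 0..h, f t| := by
        rw [Finset.sum_sub_distrib, sub_add_eq_sub_sub_swap]
    _ ≤ ∑ i ∈ Finset.Ico 1 n, |h * v i - ∫ t in i * h..i * h + h, f t| +
          |∫ t in 0..h, f t| :=
        (abs_sub _ _).trans (add_le_add_left (Finset.abs_sum_le_sum_abs _ _) _)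
    _ ≤ ∑ _i ∈ Finset.Ico 1 n, h * ω + h * M := add_le_add (Finset.sum_le_sum hcell) hfirst
    _ ≤ h * M + L * ω := by
        rw [Finset.sum_const, Nat.card_Ico, nsmul_eq_mul, Nat.cast_sub hn, ← hnh]
        nlinarith [mul_nonneg hh.le hω₀]

theorem tendsto_sum_Ico_mul_integral_of_continuousOn {f : ℝ → ℝ} {L : ℝ} (hL : 0 < L)
    (hf : ContinuousOn f (Icc 0 L)) {v : ℕ → ℕ → ℝ} (hv : ∀ n : ℕ, ∀ i ∈ Finset.Ico 1 n,
      ∃ ζ ∈ Icc (i * (L / n) - L / n) (i * (L / n) + L / n), v n i = f ζ) :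
    Tendsto (fun n : ℕ => ∑ i ∈ Finset.Ico 1 n, L / n * v n i) atTop
      (𝓝 (∫ t in 0..L, f t)) := by
  obtain ⟨M, hM⟩ := isCompact_Icc.exists_bound_of_continuousOn hf
  have hmesh : Tendsto (fun n : ℕ => L / n) atTop (𝓝 0) := tendsto_const_div_atTop_nhds_zero_nat L
  rw [Metric.tendsto_nhds]
  intro ε hε
  obtain ⟨δ, hδ, hfδ⟩ := Metric.uniformContinuousOn_iff_le.mp
    (isCompact_Icc.uniformContinuousOn_of_continuous hf) (ε / (4 * L)) (by positivity)
  filter_upwards [hmesh.eventually (gt_mem_nhds (half_pos hδ)),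
    (hmesh.mul_const M).eventually (gt_mem_nhds (by rw [zero_mul]; positivity : 0 * M < ε / 4)),
    eventually_ge_atTop 1] with n hδn hMn hn
  have hωL : L * (ε / (4 * L)) = ε / 4 := by field_simp
  calc dist (∑ i ∈ Finset.Ico 1 n, L / n * v n i) (∫ t in 0..L, f t)
      ≤ L / n * M + L * (ε / (4 * L)) :=
        abs_sum_Ico_mul_sub_integral_le hL hn (hf.intervalIntegrable_of_Icc hL.le) hM
          (fun s hs t ht hst => hfδ s hs t ht (by rw [Real.dist_eq]; linarith)) (hv n)
    _ < ε := by linarith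

theorem gamma_limsup_regular_general
    (L α β c₁ c₂ : ℝ) (hL : 0 < L)
    (hc₁ : 0 < c₁)
    (lam : ℕ → ℝ) (hlam : ∀ n, lam n = L / n)
    (x : ℕ → ℕ → ℝ) (hx : ∀ n i, x n i = (i : ℝ) * lam n)
    (Ψ : ℕ → ℝ → ℝ)
    (hΨ : ∀ n, 1 ≤ n → ∀ z, Ψ n z =
      if |z| ≤ c₁ / Real.sqrt (lam n) then z ^ 2
      else if |z| ≤ c₂ / (lam n * Real.sqrt (lam n)) then α / lam n
      else β / (2 * lam n))
    (u : ℝ → ℝ) (hu : ContDiff ℝ 2 u)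
    (E : ℕ → ℝ)
    (hE : ∀ n, E n = ∑ i ∈ Finset.Ico 1 n,
      lam n * Ψ n ((u (x n (i + 1)) + u (x n (i - 1)) - 2 * u (x n i)) / (lam n) ^ 2)) :
    Tendsto E atTop (𝓝 (∫ t in (0:ℝ)..L, (deriv (deriv u) t) ^ 2)) ∧
    limsup E atTop ≤ ∫ t in (0:ℝ)..L, (deriv (deriv u) t) ^ 2 := by
  simp only [hlam] at hx hΨ hE
  obtain ⟨hu₁, -, hu'⟩ := (contDiff_succ_iff_deriv (n := 1)).mp hu
  set g := deriv (deriv u)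
  have hg : Continuous g := hu'.continuous_deriv le_rfl
  have htags : ∀ n : ℕ, ∀ i ∈ Finset.Ico 1 n,
      ∃ ζ ∈ Icc (i * (L / n) - L / n) (i * (L / n) + L / n),
        secondDiffQuot u (L / n) (i * (L / n)) = g ζ := fun n i hi =>
    (exists_secondDiffQuot_eq_deriv_deriv hu₁ (hu'.differentiable one_ne_zero)
      (div_pos hL (Nat.cast_pos.mpr (by have := Finset.mem_Ico.mp hi; omega)))
      _).imp fun _ hζ => ⟨Ioo_subset_Icc_self hζ.1, hζ.2⟩
  obtain ⟨M, hM⟩ := isCompact_Icc.exists_bound_of_continuousOn (hg.continuousOn (s := Icc 0 L))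
  have hE_eq : (fun n : ℕ => ∑ i ∈ Finset.Ico 1 n,
      L / n * secondDiffQuot u (L / n) (i * (L / n)) ^ 2) =ᶠ[atTop] E := by
    filter_upwards [(tendsto_const_div_sqrt_div_natCast_atTop hc₁ hL).eventually_ge_atTop M]
      with n hn
    rw [hE n]
    refine Finset.sum_congr rfl fun i hi => ?_
    obtain ⟨ζ, hζ, hζ_eq⟩ := htags n i hi
    obtain ⟨hi₁, hin⟩ := Finset.mem_Ico.mp hi
    rw [hx, hx, hx, secondDiffQuot_natCast_mul u _ hi₁, hΨ n (by omega), if_pos]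
    rw [hζ_eq]
    exact (hM ζ (Icc_around_grid_point_subset hL.le hi hζ)).trans hn
  have hlim := (tendsto_sum_Ico_mul_integral_of_continuousOn (f := fun t => g t ^ 2) hL
    (by fun_prop) fun n i hi => (htags n i hi).imp fun _ hζ => ⟨hζ.1, by rw [hζ.2]⟩).congr' hE_eq
  exact ⟨hlim, hlim.limsup_eq.le⟩

/-- Γ-limsup inequality at regular functions: for `u ∈ C²([0,L])` (no jumps, no
creases) and `u_n` its restriction to the grid `λ_nℤ ∩ [0,L]`, the discrete energies
`E_n(u_n) = Σ_{i=1}^{n−1} λ_n Ψ_n((u(x_{i+1}) + u(x_{i−1}) − 2u(x_i))/λ_n²)`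
converge to `∫₀^L |u''|² dt = F(u)`; in particular `limsup_n E_n(u_n) ≤ F(u)`. -/
theorem gamma_limsup_regular
    (L α β c₁ c₂ : ℝ) (hL : 0 < L)
    (hα : 0 < α) (hαβ : α ≤ β) (hβ : β ≤ 2 * α) (hc₁ : 0 < c₁) (hc₂ : 0 < c₂)
    (lam : ℕ → ℝ) (hlam : ∀ n, lam n = L / n)
    (x : ℕ → ℕ → ℝ) (hx : ∀ n i, x n i = (i : ℝ) * lam n)
    (Ψ : ℕ → ℝ → ℝ)
    (hΨ : ∀ n, 1 ≤ n → ∀ z, Ψ n z =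
      if |z| ≤ c₁ / Real.sqrt (lam n) then z ^ 2
      else if |z| ≤ c₂ / (lam n * Real.sqrt (lam n)) then α / lam n
      else β / (2 * lam n))
    (u : ℝ → ℝ) (hu : ContDiff ℝ 2 u)
    (E : ℕ → ℝ)
    (hE : ∀ n, E n = ∑ i ∈ Finset.Ico 1 n,
      lam n * Ψ n ((u (x n (i + 1)) + u (x n (i - 1)) - 2 * u (x n i)) / (lam n) ^ 2)) :
    Tendsto E atTop (𝓝 (∫ t in (0:ℝ)..L, (deriv (deriv u) t) ^ 2)) ∧
    limsup E atTop ≤ ∫ t in (0:ℝ)..L, (deriv (deriv u) t) ^ 2 :=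
  gamma_limsup_regular_general L α β c₁ c₂ hL hc₁ lam hlam x hx Ψ hΨ u hu E hE
end
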